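/- Soundness of the tactics transition system: if a sequence of goals S transitions in finitely many steps to the empty goal sequence (S ▷⁺ □), then every sequent occurring in S is derivable in natural deduction for minimal propositional logic. -/

import Mathlib

/-- Formulas of minimal propositional logic. -/
inductive Fm : Type
  | var : ℕ → Fm
  | imp : Fm → Fm → Fm
  | conj : Fm → Fm → Fm
  | disj : Fm → Fm → Fm
deriving DecidableEq

abbrev Ctx := Set Fm

/-- Natural deduction for minimal propositional logic. -/
inductive Nd : Ctx → Fm → Prop
  | hyp {Γ A} : A ∈ Γ → Nd Γ A
  | impI {Γ A B} : Nd (insert A Γ) B → Nd Γ (Fm.imp A B)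
  | impE {Γ A B} : Nd Γ (Fm.imp A B) → Nd Γ A → Nd Γ B
  | andI {Γ A B} : Nd Γ A → Nd Γ B → Nd Γ (Fm.conj A B)
  | andE1 {Γ A B} : Nd Γ (Fm.conj A B) → Nd Γ A
  | andE2 {Γ A B} : Nd Γ (Fm.conj A B) → Nd Γ B
  | orI1 {Γ A B} : Nd Γ A → Nd Γ (Fm.disj A B)
  | orI2 {Γ A B} : Nd Γ B → Nd Γ (Fm.disj A B)
  | orE {Γ A B C} : Nd Γ (Fm.disj A B) → Nd (insert A Γ) C → Nd (insert B Γ) C → Nd Γ C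

/-- Sequents (judgements) Γ ⊢ A. -/
abbrev Seqt := Ctx × Fm

/-- One step of the tactics transition system on goal sequences. -/
inductive Step : List Seqt → List Seqt → Prop
  | intro {Γ A B S} : Step ((Γ, Fm.imp A B) :: S) ((insert A Γ, B) :: S)
  | split {Γ A B S} : Step ((Γ, Fm.conj A B) :: S) ((Γ, A) :: (Γ, B) :: S)
  | left {Γ A B S} : Step ((Γ, Fm.disj A B) :: S) ((Γ, A) :: S)
  | right {Γ A B S} : Step ((Γ, Fm.disj A B) :: S) ((Γ, B) :: S)
  | apply {Γ A B S} :
      Step ((insert (Fm.imp A B) Γ, B) :: S) ((insert (Fm.imp A B) Γ, A) :: S)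
  | destructAnd {Γ A B C S} :
      Step ((insert (Fm.conj A B) Γ, C) :: S) ((insert A (insert B Γ), C) :: S)
  | destructOr {Γ A B C S} :
      Step ((insert (Fm.disj A B) Γ, C) :: S) ((insert A Γ, C) :: (insert B Γ, C) :: S)
  | assert {Γ C S} (A : Fm) : Step ((Γ, C) :: S) ((Γ, A) :: (insert A Γ, C) :: S)
  | cut {Γ C S} (A : Fm) : Step ((Γ, C) :: S) ((Γ, Fm.imp A C) :: (Γ, A) :: S)
  | triv {Γ A S} : A ∈ Γ → Step ((Γ, A) :: S) S

/-! Each tactic is backed by natural-deduction rules that rebuild a derivation of the goal it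
replaces from derivations of the goals it creates. Derivability of every goal in a sequence is
therefore preserved backwards along `Step`, and it holds trivially for the empty sequence `□`. -/

theorem Nd.mono {Γ Δ : Ctx} {A : Fm} (h : Nd Γ A) (hΓΔ : Γ ⊆ Δ) : Nd Δ A := by
  induction h generalizing Δ with
  | hyp hA => exact .hyp (hΓΔ hA)
  | impI _ ih => exact .impI (ih (Set.insert_subset_insert hΓΔ))
  | impE _ _ ih₁ ih₂ => exact .impE (ih₁ hΓΔ) (ih₂ hΓΔ)
  | andI _ _ ih₁ ih₂ => exact .andI (ih₁ hΓΔ) (ih₂ hΓΔ)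
  | andE1 _ ih => exact .andE1 (ih hΓΔ)
  | andE2 _ ih => exact .andE2 (ih hΓΔ)
  | orI1 _ ih => exact .orI1 (ih hΓΔ)
  | orI2 _ ih => exact .orI2 (ih hΓΔ)
  | orE _ _ _ ih ihA ihB =>
    exact .orE (ih hΓΔ) (ihA (Set.insert_subset_insert hΓΔ)) (ihB (Set.insert_subset_insert hΓΔ))

theorem Nd.cut {Γ : Ctx} {A C : Fm} (hA : Nd Γ A) (hC : Nd (insert A Γ) C) : Nd Γ C :=
  .impE (.impI hC) hA

theorem Nd.of_insert_conj {Γ : Ctx} {A B C : Fm} (h : Nd (insert A (insert B Γ)) C) :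
    Nd (insert (Fm.conj A B) Γ) C := by
  have hAB : Nd (insert (Fm.conj A B) Γ) (Fm.conj A B) := .hyp (Set.mem_insert _ _)
  have hA : Nd (insert B (insert (Fm.conj A B) Γ)) A := hAB.andE1.mono (Set.subset_insert _ _)
  have hC : Nd (insert A (insert B (insert (Fm.conj A B) Γ))) C :=
    h.mono (Set.insert_subset_insert (Set.insert_subset_insert (Set.subset_insert _ _)))
  exact hAB.andE2.cut (hA.cut hC)

theorem Nd.of_insert_disj {Γ : Ctx} {A B C : Fm} (hA : Nd (insert A Γ) C)
    (hB : Nd (insert B Γ) C) : Nd (insert (Fm.disj A B) Γ) C :=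
  .orE (.hyp (Set.mem_insert _ _))
    (hA.mono (Set.insert_subset_insert (Set.subset_insert _ _)))
    (hB.mono (Set.insert_subset_insert (Set.subset_insert _ _)))

theorem Step.derivable_of_derivable {S T : List Seqt} (h : Step S T)
    (hT : ∀ J ∈ T, Nd J.1 J.2) : ∀ J ∈ S, Nd J.1 J.2 := by
  cases h <;> simp only [List.forall_mem_cons] at hT ⊢
  case intro => exact ⟨.impI hT.1, hT.2⟩
  case split => exact ⟨.andI hT.1 hT.2.1, hT.2.2⟩
  case left => exact ⟨.orI1 hT.1, hT.2⟩
  case right => exact ⟨.orI2 hT.1, hT.2⟩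
  case apply => exact ⟨.impE (.hyp (Set.mem_insert _ _)) hT.1, hT.2⟩
  case destructAnd => exact ⟨hT.1.of_insert_conj, hT.2⟩
  case destructOr => exact ⟨.of_insert_disj hT.1 hT.2.1, hT.2.2⟩
  case assert => exact ⟨hT.1.cut hT.2.1, hT.2.2⟩
  case cut => exact ⟨.impE hT.1 hT.2.1, hT.2.2⟩
  case triv hA => exact ⟨.hyp hA, hT⟩

theorem stmt10 {S : List Seqt} (h : Relation.TransGen Step S []) :
    ∀ J ∈ S, Nd J.1 J.2 := by
  induction h using Relation.TransGen.head_induction_on with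
  | single hstep => exact hstep.derivable_of_derivable (by simp)
  | head hstep _ ih => exact hstep.derivable_of_derivable ih
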